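/- arXiv:1305.0510 — 2 statements merged into one kernel-verified Lean document; each statement's English description precedes it below -/
import Mathlib

section
/- If K clients all have requested bitrate strictly greater than the fair share, r_k > C/K for every k, then in the idealized model all clients' downloads take longer than τ eventually and the TCP throughput of every client converges to exactly the fair share: there exists n' such that x̃_k[n] = C/K for all k and all n ≥ n'. In particular, if every client is always active and the instantaneous rate is C/K, then x̃_k[n] = (r_k·τ)/((r_k·τ)/(C/K)) = C/K. -/
/-!
Write `c = C / K` for the fair share. The link delivers at most `C` per unit time in total and
at least `c` to each active client, so a download of `r k * τ` lasts at most `r k * τ / c`.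
Hence the excess `r k * τ - c * max τ (T k n)` of every request step is nonnegative, and it equals
`(r k - c) * τ > 0` when the download finished before `τ`. Over `N` steps the request time of
client `k` advances by `(N * r k * τ - Σ excess) / c`, whereas by a common time `U` all clients
together have received at most `C * U`; comparing the two bounds the partial sums of the
excesses. They therefore tend to zero, so eventually every download lasts at least `τ`. From then
on each client requests back to back, all `K` clients are active, the rate is exactly `c`, and a
download of `r k * τ` lasts `r k * τ / c`.
-/

open MeasureTheory Filter Finset Function
open scoped Classical

def RequestRecursion (τ : ℝ) (t T : ℕ → ℝ) : Prop :=
  ∀ n, t (n + 1) = t n + max τ (T n)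

def downloadInterval (t T : ℕ → ℝ) (n : ℕ) : Set ℝ := Set.Ico (t n) (t n + T n)

def busyTimes (t T : ℕ → ℝ) : Set ℝ := ⋃ n, downloadInterval t T n

theorem measurableSet_downloadInterval {t T : ℕ → ℝ} {n : ℕ} :
    MeasurableSet (downloadInterval t T n) :=
  measurableSet_Ico

theorem downloadInterval_subset_busyTimes {t T : ℕ → ℝ} {n : ℕ} :
    downloadInterval t T n ⊆ busyTimes t T :=
  Set.subset_iUnion _ n

theorem measurableSet_busyTimes {t T : ℕ → ℝ} : MeasurableSet (busyTimes t T) :=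
  MeasurableSet.iUnion fun _ => measurableSet_downloadInterval

theorem exists_le_lt_succ_of_tendsto {t : ℕ → ℝ} (ht : Tendsto t atTop atTop) {m : ℕ} {x : ℝ}
    (hm : t m ≤ x) : ∃ n, m ≤ n ∧ t n ≤ x ∧ x < t (n + 1) := by
  have hex : ∃ p, x < t (p + m) :=
    ((ht.comp (tendsto_add_atTop_nat m)).eventually_gt_atTop x).exists
  have hpos : Nat.find hex ≠ 0 := fun h => (Nat.find_spec hex).not_ge (by simpa [h] using hm)
  obtain ⟨p, hp⟩ := Nat.exists_eq_add_one_of_ne_zero hpos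
  refine ⟨p + m, Nat.le_add_left m p, not_lt.1 (Nat.find_min hex (by omega)), ?_⟩
  simpa [hp, Nat.add_right_comm] using Nat.find_spec hex

theorem sum_setIntegral_inter_le_mul {ι α : Type*} [Fintype ι] [MeasurableSpace α] {μ : Measure α}
    {S : ι → Set α} (hS : ∀ k, MeasurableSet (S k)) {g : α → ℝ} {W : Set α}
    (hW : MeasurableSet W) (hμW : μ W ≠ ⊤) (hg : IntegrableOn g W μ) {c : ℝ}
    (hle : ∀ x ∈ W, ∑ k, (S k).indicator g x ≤ c) :
    ∑ k, ∫ x in S k ∩ W, g x ∂μ ≤ c * μ.real W := by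
  calc ∑ k, ∫ x in S k ∩ W, g x ∂μ = ∫ x in W, ∑ k, (S k).indicator g x ∂μ := by
        rw [integral_finsetSum _ fun k _ => hg.indicator (hS k)]
        exact sum_congr rfl fun k _ => by rw [setIntegral_indicator (hS k), Set.inter_comm]
    _ ≤ ∫ _ in W, c ∂μ :=
        setIntegral_mono_on (integrable_finsetSum _ fun k _ => hg.indicator (hS k))
          (integrableOn_const hμW) hW hle
    _ = c * μ.real W := by rw [setIntegral_const, smul_eq_mul, mul_comm]

namespace RequestRecursion

variable {τ : ℝ} {t T : ℕ → ℝ}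

theorem monotone (h : RequestRecursion τ t T) (hτ : 0 ≤ τ) : Monotone t :=
  monotone_nat_of_le_succ fun n => by rw [h n]; linarith [le_max_left τ (T n)]

theorem add_le_succ (h : RequestRecursion τ t T) (n : ℕ) : t n + T n ≤ t (n + 1) := by
  rw [h n]; linarith [le_max_right τ (T n)]

theorem add_mul_le (h : RequestRecursion τ t T) (n : ℕ) : t 0 + n * τ ≤ t n := by
  induction n with
  | zero => simp
  | succ n ih => rw [h n]; push_cast; linarith [le_max_left τ (T n)]

theorem tendsto_atTop (h : RequestRecursion τ t T) (hτ : 0 < τ) : Tendsto t atTop atTop :=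
  tendsto_atTop_mono h.add_mul_le <|
    tendsto_atTop_add_const_left _ _ (tendsto_natCast_atTop_atTop.atTop_mul_const hτ)

theorem eq_add_sum (h : RequestRecursion τ t T) (N : ℕ) :
    t N = t 0 + ∑ n ∈ range N, max τ (T n) := by
  induction N with
  | zero => simp
  | succ N ih => rw [h N, ih, sum_range_succ, add_assoc]

theorem pairwise_disjoint_downloadInterval (h : RequestRecursion τ t T) (hτ : 0 ≤ τ) :
    Pairwise (Disjoint on downloadInterval t T) := by
  intro n m hnm
  wlog hlt : n < m generalizing n m
  · exact (this hnm.symm (hnm.lt_or_gt.resolve_left hlt)).symm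
  refine Set.disjoint_left.2 fun x hxn hxm => ?_
  linarith [hxn.2, hxm.1, h.add_le_succ n, h.monotone hτ hlt]

theorem downloadInterval_subset_Ico (h : RequestRecursion τ t T) (hτ : 0 ≤ τ) {n N : ℕ}
    (hn : n < N) : downloadInterval t T n ⊆ Set.Ico (t 0) (t N) := fun _ hx =>
  ⟨(h.monotone hτ n.zero_le).trans hx.1,
    hx.2.trans_le ((h.add_le_succ n).trans (h.monotone hτ hn))⟩

theorem Ici_subset_busyTimes (h : RequestRecursion τ t T) (hτ : 0 < τ) {m : ℕ}
    (hlong : ∀ n ≥ m, τ ≤ T n) : Set.Ici (t m) ⊆ busyTimes t T := fun x hx => by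
  obtain ⟨n, hmn, hnx, hxn⟩ := exists_le_lt_succ_of_tendsto (h.tendsto_atTop hτ) hx
  rw [h n, max_eq_right (hlong n hmn)] at hxn
  exact Set.mem_iUnion.2 ⟨n, hnx, hxn⟩

theorem sum_setIntegral_downloadInterval_le (h : RequestRecursion τ t T) (hτ : 0 ≤ τ)
    {g : ℝ → ℝ} (hg : ∀ x, 0 ≤ g x) {W : Set ℝ} (hgW : IntegrableOn g W) {N : ℕ}
    (hW : Set.Ico (t 0) (t N) ⊆ W) :
    ∑ n ∈ range N, ∫ x in downloadInterval t T n, g x ≤ ∫ x in busyTimes t T ∩ W, g x := by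
  have hsub : ⋃ n ∈ range N, downloadInterval t T n ⊆ busyTimes t T ∩ W :=
    Set.iUnion₂_subset fun n hn => Set.subset_inter downloadInterval_subset_busyTimes
      ((h.downloadInterval_subset_Ico hτ (mem_range.1 hn)).trans hW)
  have hgU := hgW.mono_set (hsub.trans Set.inter_subset_right)
  rw [← integral_biUnion_finset _ (fun _ _ => measurableSet_downloadInterval)
    ((h.pairwise_disjoint_downloadInterval hτ).set_pairwise _)
    fun n hn => hgU.mono_set (Set.subset_biUnion_of_mem hn)]
  exact setIntegral_mono_set (hgW.mono_set Set.inter_subset_right)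
    (Eventually.of_forall hg) hsub.eventuallyLE

end RequestRecursion

section FlowRate

variable {ι α : Type*} [Fintype ι] {C : ℝ} {S : ι → Set α} {x : α}

noncomputable def activeCount (S : ι → Set α) (x : α) : ℕ := #{k | x ∈ S k}

noncomputable def flowRate (C : ℝ) (S : ι → Set α) (x : α) : ℝ := C / activeCount S x

theorem flowRate_nonneg (hC : 0 ≤ C) : 0 ≤ flowRate C S x :=
  div_nonneg hC (Nat.cast_nonneg _)

theorem flowRate_le (hC : 0 ≤ C) : flowRate C S x ≤ C := by
  obtain h | h := (activeCount S x).eq_zero_or_pos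
  · simp [flowRate, h, hC]
  · exact div_le_self hC (Nat.one_le_cast.2 h)

theorem div_card_le_flowRate (hC : 0 ≤ C) {k : ι} (hx : x ∈ S k) :
    C / Fintype.card ι ≤ flowRate C S x :=
  div_le_div_of_nonneg_left hC (Nat.cast_pos.2 (card_pos.2 ⟨k, by simpa using hx⟩))
    (Nat.cast_le.2 (card_le_univ _))

theorem flowRate_eq_div_card (hx : ∀ k, x ∈ S k) : flowRate C S x = C / Fintype.card ι := by
  simp [flowRate, activeCount, hx]

theorem sum_indicator_flowRate_le (hC : 0 ≤ C) (x : α) :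
    ∑ k, (S k).indicator (flowRate C S) x ≤ C := by
  have hsum : ∑ k, (S k).indicator (flowRate C S) x = activeCount S x * flowRate C S x := by
    simp [Set.indicator_apply, activeCount, ← sum_filter]
  obtain h | h := (activeCount S x).eq_zero_or_pos
  · simp [hsum, h, hC]
  · rw [hsum, flowRate, mul_div_cancel₀ _ (by positivity)]

theorem natCast_activeCount : (activeCount S x : ℝ) = ∑ k, (S k).indicator 1 x := by
  simp [Set.indicator_apply, activeCount]

variable [MeasurableSpace α]

theorem measurable_flowRate (hS : ∀ k, MeasurableSet (S k)) : Measurable (flowRate C S) := by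
  rw [show flowRate C S = fun x => C / ∑ k, (S k).indicator 1 x from
    funext fun x => by rw [flowRate, natCast_activeCount]]
  exact measurable_const.div (Finset.measurable_sum _ fun k _ => measurable_const.indicator (hS k))

theorem integrableOn_flowRate {μ : Measure α} (hS : ∀ k, MeasurableSet (S k)) (hC : 0 ≤ C)
    {s : Set α} (hs : μ s ≠ ⊤) : IntegrableOn (flowRate C S) s μ :=
  Measure.integrableOn_of_bounded hs (measurable_flowRate hS).aestronglyMeasurable
    (Eventually.of_forall fun _ => by
      rw [Real.norm_of_nonneg (flowRate_nonneg hC)]; exact flowRate_le hC)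

end FlowRate

structure IdealTcpSharing {ι : Type*} [Fintype ι] (C τ : ℝ) (r : ι → ℝ) (t T : ι → ℕ → ℝ) :
    Prop where
  C_pos : 0 < C
  τ_pos : 0 < τ
  requests : ∀ k, RequestRecursion τ (t k) (T k)
  integral_flowRate : ∀ k n,
    ∫ x in downloadInterval (t k) (T k) n, flowRate C (fun j => busyTimes (t j) (T j)) x = r k * τ

noncomputable def excessWork {ι : Type*} [Fintype ι] (C τ : ℝ) (r : ι → ℝ) (T : ι → ℕ → ℝ)
    (k : ι) (n : ℕ) : ℝ :=
  r k * τ - C / Fintype.card ι * max τ (T k n)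

namespace IdealTcpSharing

variable {ι : Type*} [Fintype ι] {C τ : ℝ} {r : ι → ℝ} {t T : ι → ℕ → ℝ}

theorem integrableOn_flowRate (h : IdealTcpSharing C τ r t T) {s : Set ℝ} (hs : volume s ≠ ⊤) :
    IntegrableOn (flowRate C fun j => busyTimes (t j) (T j)) s :=
  _root_.integrableOn_flowRate (fun _ => measurableSet_busyTimes) h.C_pos.le hs

theorem div_card_nonneg (h : IdealTcpSharing C τ r t T) : 0 ≤ C / Fintype.card ι :=
  div_nonneg h.C_pos.le (Nat.cast_nonneg _)

theorem div_card_mul_le (h : IdealTcpSharing C τ r t T) (k : ι) (n : ℕ) :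
    C / Fintype.card ι * T k n ≤ r k * τ := by
  have hI : C / Fintype.card ι * volume.real (downloadInterval (t k) (T k) n) ≤
      ∫ x in downloadInterval (t k) (T k) n, flowRate C (fun j => busyTimes (t j) (T j)) x :=
    setIntegral_ge_of_const_le_real measurableSet_downloadInterval measure_Ico_lt_top.ne
      (fun _ hx => div_card_le_flowRate h.C_pos.le (downloadInterval_subset_busyTimes hx))
      (h.integrableOn_flowRate measure_Ico_lt_top.ne)
  rw [h.integral_flowRate, downloadInterval, Real.volume_real_Ico, add_sub_cancel_left] at hI
  exact (mul_le_mul_of_nonneg_left (le_max_left _ _) h.div_card_nonneg).trans hI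

theorem sum_mul_le (h : IdealTcpSharing C τ r t T) {L U : ℝ} {N : ι → ℕ} (hL : ∀ k, L ≤ t k 0)
    (hU : ∀ k, t k (N k) ≤ U) (hLU : L ≤ U) :
    ∑ k, N k * (r k * τ) ≤ C * (U - L) := by
  set f := flowRate C fun j => busyTimes (t j) (T j)
  have hW : volume (Set.Ico L U) ≠ ⊤ := measure_Ico_lt_top.ne
  calc ∑ k, N k * (r k * τ)
      = ∑ k, ∑ n ∈ range (N k), ∫ x in downloadInterval (t k) (T k) n, f x := by
        simp [f, h.integral_flowRate]
    _ ≤ ∑ k, ∫ x in busyTimes (t k) (T k) ∩ Set.Ico L U, f x :=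
        sum_le_sum fun k _ => (h.requests k).sum_setIntegral_downloadInterval_le h.τ_pos.le
          (fun _ => flowRate_nonneg h.C_pos.le) (h.integrableOn_flowRate hW)
          (Set.Ico_subset_Ico (hL k) (hU k))
    _ ≤ C * volume.real (Set.Ico L U) :=
        sum_setIntegral_inter_le_mul (fun _ => measurableSet_busyTimes) measurableSet_Ico hW
          (h.integrableOn_flowRate hW) fun x _ => sum_indicator_flowRate_le h.C_pos.le x
    _ = C * (U - L) := by rw [Real.volume_real_Ico_of_le hLU]

theorem div_card_mul_eq (h : IdealTcpSharing C τ r t T) (k : ι) (N : ℕ) :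
    C / Fintype.card ι * t k N =
      C / Fintype.card ι * t k 0 + N * (r k * τ) - ∑ n ∈ range N, excessWork C τ r T k n := by
  simp only [excessWork]
  rw [sum_sub_distrib, sum_const, card_range, nsmul_eq_mul, ← mul_sum, (h.requests k).eq_add_sum N]
  ring

theorem sum_sum_excessWork_le [Nonempty ι] (h : IdealTcpSharing C τ r t T) {L U : ℝ} {N : ι → ℕ}
    (hL : ∀ k, L ≤ t k 0) (hLU : L ≤ U) (hN : ∀ k, t k (N k) ≤ U ∧ U < t k (N k + 1)) :
    ∑ k, ∑ n ∈ range (N k + 1), excessWork C τ r T k n ≤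
      ∑ k, (C / Fintype.card ι * (t k 0 - L) + r k * τ) := by
  have hK : (Fintype.card ι : ℝ) ≠ 0 := Nat.cast_ne_zero.2 Fintype.card_ne_zero
  set c := C / Fintype.card ι
  calc ∑ k, ∑ n ∈ range (N k + 1), excessWork C τ r T k n
      ≤ ∑ k, ((c * (t k 0 - L) + r k * τ) + (N k * (r k * τ) - c * (U - L))) := by
        refine sum_le_sum fun k _ => ?_
        have hcU : c * U ≤ c * t k (N k + 1) :=
          mul_le_mul_of_nonneg_left (hN k).2.le h.div_card_nonneg
        have := h.div_card_mul_eq k (N k + 1)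
        push_cast at this
        linarith
    _ = ∑ k, (c * (t k 0 - L) + r k * τ) + (∑ k, N k * (r k * τ) - C * (U - L)) := by
        rw [sum_add_distrib, sum_sub_distrib, sum_const, card_univ, nsmul_eq_mul, ← mul_assoc,
          mul_div_cancel₀ _ hK]
    _ ≤ ∑ k, (c * (t k 0 - L) + r k * τ) := by
        linarith [h.sum_mul_le hL (fun k => (hN k).1) hLU]

theorem excessWork_nonneg (h : IdealTcpSharing C τ r t T) (hr : ∀ k, C / Fintype.card ι < r k)
    (k : ι) (n : ℕ) : 0 ≤ excessWork C τ r T k n := by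
  rw [excessWork, sub_nonneg, mul_max_of_nonneg _ _ h.div_card_nonneg]
  exact max_le (mul_le_mul_of_nonneg_right (hr k).le h.τ_pos.le) (h.div_card_mul_le k n)

theorem exists_sum_range_excessWork_le (h : IdealTcpSharing C τ r t T)
    (hr : ∀ k, C / Fintype.card ι < r k) (k : ι) :
    ∃ D, ∀ N, ∑ n ∈ range N, excessWork C τ r T k n ≤ D := by
  have : Nonempty ι := ⟨k⟩
  obtain ⟨L, hL⟩ := (Set.finite_range fun j => t j 0).bddBelow
  refine ⟨∑ j, (C / Fintype.card ι * (t j 0 - L) + r j * τ), fun N => ?_⟩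
  obtain ⟨U, hU⟩ := (Set.finite_range fun j => t j N).bddAbove
  choose M hNM hM using fun j =>
    exists_le_lt_succ_of_tendsto ((h.requests j).tendsto_atTop h.τ_pos) (hU ⟨j, rfl⟩)
  have hLU : L ≤ U :=
    (hL ⟨k, rfl⟩).trans (((h.requests k).monotone h.τ_pos.le (Nat.zero_le _)).trans (hM k).1)
  calc ∑ n ∈ range N, excessWork C τ r T k n
      ≤ ∑ n ∈ range (M k + 1), excessWork C τ r T k n :=
        sum_le_sum_of_subset_of_nonneg (range_subset_range.2 ((hNM k).trans (M k).le_succ))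
          fun n _ _ => h.excessWork_nonneg hr k n
    _ ≤ ∑ j, ∑ n ∈ range (M j + 1), excessWork C τ r T j n :=
        single_le_sum (f := fun j => ∑ n ∈ range (M j + 1), excessWork C τ r T j n)
          (fun j _ => sum_nonneg fun n _ => h.excessWork_nonneg hr j n) (mem_univ k)
    _ ≤ _ := h.sum_sum_excessWork_le (fun j => hL ⟨j, rfl⟩) hLU hM

theorem eventually_τ_le (h : IdealTcpSharing C τ r t T) (hr : ∀ k, C / Fintype.card ι < r k)
    (k : ι) : ∀ᶠ n in atTop, τ ≤ T k n := by
  obtain ⟨D, hD⟩ := h.exists_sum_range_excessWork_le hr k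
  have hgap : C / Fintype.card ι * τ < r k * τ := mul_lt_mul_of_pos_right (hr k) h.τ_pos
  filter_upwards [(summable_of_sum_range_le (h.excessWork_nonneg hr k) hD).tendsto_atTop_zero
    |>.eventually (gt_mem_nhds (sub_pos.2 hgap))] with n hn
  by_contra hlt
  rw [excessWork, max_eq_left (not_le.1 hlt).le] at hn
  exact hn.false

theorem eventually_flowRate_eq (h : IdealTcpSharing C τ r t T)
    (hr : ∀ k, C / Fintype.card ι < r k) :
    ∀ᶠ x in atTop, flowRate C (fun j => busyTimes (t j) (T j)) x = C / Fintype.card ι := by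
  obtain ⟨m, hm⟩ := eventually_atTop.1 (eventually_all.2 (h.eventually_τ_le hr))
  obtain ⟨U, hU⟩ := (Set.finite_range fun j => t j m).bddAbove
  filter_upwards [eventually_ge_atTop U] with x hx
  exact flowRate_eq_div_card fun j => (h.requests j).Ici_subset_busyTimes h.τ_pos
    (fun n hn => hm n hn j) ((hU ⟨j, rfl⟩).trans hx)

theorem eventually_throughput_eq (h : IdealTcpSharing C τ r t T)
    (hr : ∀ k, C / Fintype.card ι < r k) :
    ∀ᶠ n in atTop, ∀ k, r k * τ / T k n = C / Fintype.card ι := by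
  obtain ⟨U, hU⟩ := eventually_atTop.1 (h.eventually_flowRate_eq hr)
  filter_upwards [eventually_all.2 (h.eventually_τ_le hr),
    eventually_all.2 fun k => ((h.requests k).tendsto_atTop h.τ_pos).eventually_ge_atTop U]
    with n hlong hlate k
  have hT : 0 < T k n := h.τ_pos.trans_le (hlong k)
  have hwork := h.integral_flowRate k n
  rw [setIntegral_congr_fun measurableSet_downloadInterval
      fun x hx => hU x ((hlate k).trans hx.1), setIntegral_const, downloadInterval,
    Real.volume_real_Ico_of_le (by linarith), smul_eq_mul, add_sub_cancel_left] at hwork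
  rw [← hwork, mul_div_cancel_left₀ _ hT.ne']

end IdealTcpSharing

theorem throughput_converges_to_fair_share_of_oversubscription_general
    (K : ℕ)
    (C τ : ℝ) (hC : 0 < C) (hτ : 0 < τ)
    (r : Fin K → ℝ) (t Ttil : Fin K → ℕ → ℝ)
    (hrec : ∀ k n, t k (n + 1) = t k n + max τ (Ttil k n))
    (A : ℝ → ℕ)
    (hA : ∀ x : ℝ, A x =
      Finset.card (Finset.univ.filter
        (fun k : Fin K => ∃ n, x ∈ Set.Ico (t k n) (t k n + Ttil k n))))
    (hseg : ∀ k n,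
      ∫ x in Set.Ioc (t k n) (t k n + Ttil k n), C / (A x : ℝ) = r k * τ)
    (hr : ∀ k, r k > C / (K : ℝ)) :
    ∃ n' : ℕ, ∀ k, ∀ n ≥ n', r k * τ / Ttil k n = C / (K : ℝ) := by
  have hrate : (fun x => C / (A x : ℝ)) = flowRate C fun j => busyTimes (t j) (Ttil j) := by
    funext x
    simp [flowRate, activeCount, hA, busyTimes, downloadInterval]
  have h : IdealTcpSharing C τ r t Ttil :=
    { C_pos := hC, τ_pos := hτ, requests := hrec
      integral_flowRate := fun k n => by
        rw [downloadInterval, integral_Ico_eq_integral_Ioo, ← integral_Ioc_eq_integral_Ioo,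
          ← hrate]
        exact hseg k n }
  obtain ⟨n', hn'⟩ := (h.eventually_throughput_eq (by simpa using hr)).exists_forall_of_atTop
  exact ⟨n', fun k n hn => by simpa using hn' n hn k⟩

/-- In the idealized TCP sharing model, if every client's
requested bitrate strictly exceeds the fair share (`r k > C/K` for all `k`),
then eventually every client's TCP throughput `r k · τ / T̃ k n` equals the
fair share `C/K`. -/
theorem throughput_converges_to_fair_share_of_oversubscription
    (K : ℕ) (hK : 0 < K)
    (C τ : ℝ) (hC : 0 < C) (hτ : 0 < τ)
    (r : Fin K → ℝ) (t Ttil : Fin K → ℕ → ℝ)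
    (hTpos : ∀ k n, 0 < Ttil k n)
    (hrec : ∀ k n, t k (n + 1) = t k n + max τ (Ttil k n))
    (A : ℝ → ℕ)
    (hA : ∀ x : ℝ, A x =
      Finset.card (Finset.univ.filter
        (fun k : Fin K => ∃ n, x ∈ Set.Ico (t k n) (t k n + Ttil k n))))
    (hseg : ∀ k n,
      ∫ x in Set.Ioc (t k n) (t k n + Ttil k n), C / (A x : ℝ) = r k * τ)
    (hr : ∀ k, r k > C / (K : ℝ)) :
    ∃ n' : ℕ, ∀ k, ∀ n ≥ n', r k * τ / Ttil k n = C / (K : ℝ) :=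
  throughput_converges_to_fair_share_of_oversubscription_general K C τ hC hτ r t Ttil hrec A hA hseg
    hr
end

section
/- In the PANDA probing recursion with x̃ = C fixed, starting from any x̂[0] < C, the sequence increases additively (x̂[n] = x̂[0] + n·κ·w·τ while below C), crosses C in finitely many steps, and thereafter remains bounded above by max(x̂_cross, C + w + κτ·w) where x̂_cross ≤ C + κwτ is the first value at or above C; in particular x̂[n] is bounded for all n when κτ < 2. -/
/-!
Below `C` the update adds exactly `κτw > 0`, so the sequence is arithmetic until it first reaches
`C`, which it does after finitely many steps and overshoots by at most `κτw`. Above `C` the update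
moves towards `C + w`: a point above `C + w` moves down, and a point in `[C, C + w]` rises by at
most `κτw`. Hence `max y (C + w + κτw)` never increases along the orbit.
-/

def probeStep (a w C y : ℝ) : ℝ := y + a * (w - max 0 (y - C))

section Step

variable {a w C y : ℝ}

theorem probeStep_of_lt (hy : y < C) : probeStep a w C y = y + a * w := by
  simp [probeStep, max_eq_left (sub_nonpos.2 hy.le)]

theorem probeStep_lt_add_of_lt (hy : y < C) : probeStep a w C y < C + a * w := by
  rw [probeStep_of_lt hy]
  linarith

theorem probeStep_le_max (ha : 0 ≤ a) (hw : 0 ≤ w) :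
    probeStep a w C y ≤ max y (C + w + a * w) := by
  rcases lt_or_ge y C with hyC | hCy
  · rw [probeStep_of_lt hyC]
    exact le_max_of_le_right (by nlinarith)
  · rw [probeStep, max_eq_right (sub_nonneg.2 hCy)]
    rcases le_or_gt y (C + w) with hyw | hwy
    · exact le_max_of_le_right (by nlinarith)
    · exact le_max_of_le_left (by nlinarith)

end Step

section Orbit

variable {a w C : ℝ} {x : ℕ → ℝ}

theorem orbit_eq_of_forall_lt (hrec : ∀ n, x (n + 1) = probeStep a w C (x n)) {n : ℕ}
    (hlt : ∀ m < n, x m < C) : x n = x 0 + n * (a * w) := by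
  induction n with
  | zero => simp
  | succ n ih =>
    rw [hrec, probeStep_of_lt (hlt n n.lt_succ_self),
      ih fun m hm => hlt m (hm.trans n.lt_succ_self)]
    push_cast
    ring

theorem orbit_exists_le (hrec : ∀ n, x (n + 1) = probeStep a w C (x n)) (hd : 0 < a * w) :
    ∃ n, C ≤ x n := by
  by_contra! hlt
  obtain ⟨n, hn⟩ := exists_nat_ge ((C - x 0) / (a * w))
  have hxn := orbit_eq_of_forall_lt hrec (n := n) fun m _ => hlt m
  rw [div_le_iff₀ hd] at hn
  linarith [hlt n]

theorem orbit_le_of_le (hrec : ∀ n, x (n + 1) = probeStep a w C (x n)) (ha : 0 ≤ a)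
    (hw : 0 ≤ w) {M : ℝ} (h0 : x 0 ≤ M) (hM : C + w + a * w ≤ M) (n : ℕ) : x n ≤ M := by
  induction n with
  | zero => exact h0
  | succ n ih => exact hrec n ▸ (probeStep_le_max ha hw).trans (max_le ih hM)

end Orbit

theorem panda_probing_bounded_general
    (κ τ w C : ℝ)
    (hκ : 0 < κ) (hτ : 0 < τ) (hw : 0 < w)
    (x : ℕ → ℝ) (hx0 : x 0 < C)
    (hrec : ∀ n, x (n + 1) = x n + κ * τ * (w - max 0 (x n - C))) :
    (∀ n : ℕ, (∀ m < n, x m < C) → x n = x 0 + (n : ℝ) * (κ * τ * w)) ∧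
    ∃ N : ℕ, C ≤ x N ∧ (∀ m < N, x m < C) ∧ x N ≤ C + κ * w * τ ∧
      ∀ n : ℕ, x n ≤ max (x N) (C + w + κ * τ * w) := by
  have hrec : ∀ n, x (n + 1) = probeStep (κ * τ) w C (x n) := hrec
  classical
  have hex := orbit_exists_le hrec (by positivity)
  set N := Nat.find hex
  have hN : C ≤ x N := Nat.find_spec hex
  have hbelow : ∀ m < N, x m < C := fun m hm => not_le.1 (Nat.find_min hex hm)
  obtain ⟨k, hk⟩ : ∃ k, N = k + 1 :=
    Nat.exists_eq_succ_of_ne_zero fun h0 => (h0 ▸ hN).not_gt hx0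
  have hcross : x N ≤ C + κ * w * τ := by
    rw [hk, hrec, mul_right_comm]
    exact (probeStep_lt_add_of_lt (hbelow k (by omega))).le
  refine ⟨fun n => orbit_eq_of_forall_lt hrec, N, hN, hbelow, hcross,
    orbit_le_of_le hrec (by positivity) hw.le ?_ (le_max_right _ _)⟩
  exact le_max_of_le_left (hx0.le.trans hN)

/-- For the PANDA probing recursion
`x̂[n+1] = x̂[n] + κτ·(w − max(0, x̂[n] − C))` with `κτ < 2` and
`x̂[0] < C`: while below `C` the sequence increases additively by `κτw`
per step; it crosses `C` in finitely many steps at a value at most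
`C + κwτ`; and it remains bounded above by
`max(x̂_cross, C + w + κτ·w)` forever. -/
theorem panda_probing_bounded
    (κ τ w C : ℝ)
    (hκ : 0 < κ) (hτ : 0 < τ) (hw : 0 < w) (hC : 0 < C)
    (hkt : κ * τ < 2)
    (x : ℕ → ℝ) (hx0 : x 0 < C)
    (hrec : ∀ n, x (n + 1) = x n + κ * τ * (w - max 0 (x n - C))) :
    (∀ n : ℕ, (∀ m < n, x m < C) → x n = x 0 + (n : ℝ) * (κ * τ * w)) ∧
    ∃ N : ℕ, C ≤ x N ∧ (∀ m < N, x m < C) ∧ x N ≤ C + κ * w * τ ∧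
      ∀ n : ℕ, x n ≤ max (x N) (C + w + κ * τ * w) :=
  panda_probing_bounded_general κ τ w C hκ hτ hw x hx0 hrec
end
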